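/- Consider D = {R(a,b,b), R(b,c,d), R(d,a,a)} with ternary relation R, and the query q = ∃x,y,z,u. R(x,y,y) ∧ R(y,z,u) ∧ ¬R(u,x,x). Then S = {R(a,b,b), R(b,c,d)} is a minimal D-monotone support for q (S satisfies q, all supersets within D satisfy q, and no proper subset has this property), but S is not a positive support, i.e. there is no assignment (x,y,z,u) mapping the positive atoms into S whose negated atom image R(u,x,x) avoids D. -/
import Mathlib


/-- The constants of the database. -/
inductive Const | a | b | c | d
deriving DecidableEq

open Const

/-- Facts of the ternary relation R. -/
abbrev DBFact := Const × Const × Const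

def R (x y z : Const) : DBFact := (x, y, z)

/-- The database D = {R(a,b,b), R(b,c,d), R(d,a,a)}. -/
def D : Set DBFact := {R a b b, R b c d, R d a a}

/-- `S'` satisfies q = ∃x,y,z,u. R(x,y,y) ∧ R(y,z,u) ∧ ¬R(u,x,x). -/
def Sat (S' : Set DBFact) : Prop :=
  ∃ x y z u : Const, R x y y ∈ S' ∧ R y z u ∈ S' ∧ R u x x ∉ S'

/-- `S ⊆ D` is a D-monotone support: every set between `S` and `D` satisfies q. -/
def DMonSupport (S : Set DBFact) : Prop :=
  S ⊆ D ∧ ∀ S' : Set DBFact, S ⊆ S' → S' ⊆ D → Sat S'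

/-- `S` is a positive support: some assignment maps the positive atoms into `S`
while the negated atom is absent from the full database `D`. -/
def PosSupport (S : Set DBFact) : Prop :=
  S ⊆ D ∧ ∃ x y z u : Const, R x y y ∈ S ∧ R y z u ∈ S ∧ R u x x ∉ D

lemma not_sat_abb : ¬ Sat {R a b b} := by
  rintro ⟨x, y, z, u, h1, h2, -⟩
  simp only [R, Set.mem_singleton_iff, Prod.mk.injEq] at h1 h2
  obtain ⟨rfl, rfl, -⟩ := h1
  exact absurd h2.1 (by decide)

lemma not_sat_bcd : ¬ Sat {R b c d} := by
  rintro ⟨x, y, z, u, h1, -, -⟩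
  simp only [R, Set.mem_singleton_iff, Prod.mk.injEq] at h1
  obtain ⟨rfl, rfl, h⟩ := h1
  exact absurd h (by decide)

/-- S = {R(a,b,b), R(b,c,d)} is a minimal D-monotone support but not a
positive support. -/
theorem monotone_support_not_positive_support :
    DMonSupport {R a b b, R b c d} ∧
    (∀ T : Set DBFact, T ⊂ {R a b b, R b c d} → ¬ DMonSupport T) ∧
    ¬ PosSupport {R a b b, R b c d} := by
  have hSD : ({R a b b, R b c d} : Set DBFact) ⊆ D := by
    rintro f (rfl | hf)
    · exact Or.inl rfl
    · exact Or.inr (Or.inl hf)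
  refine ⟨⟨hSD, ?_⟩, ?_, ?_⟩
  · intro S' hS hD
    by_cases h : R d a a ∈ S'
    · refine ⟨d, a, b, b, h, hS (Set.mem_insert _ _), fun hb => ?_⟩
      have := hD hb
      simp [D, R, Prod.ext_iff] at this
    · exact ⟨a, b, c, d, hS (Set.mem_insert _ _),
        hS (Set.mem_insert_of_mem _ rfl), h⟩
  · intro T hT hmon
    by_cases h1 : R a b b ∈ T
    · by_cases h2 : R b c d ∈ T
      · exact hT.2 (fun f hf => by rcases hf with h | h <;> simp_all)
      · have hsub : T ⊆ {R a b b} := by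
          intro f hf
          rcases hT.1 hf with h | h
          · simpa using h
          · exact absurd (h ▸ hf) h2
        exact not_sat_abb (hmon.2 {R a b b} hsub (Set.singleton_subset_iff.mpr (Or.inl rfl)))
    · have hsub : T ⊆ {R b c d} := by
        intro f hf
        rcases hT.1 hf with h | h
        · exact absurd (h ▸ hf) h1
        · simpa using h
      exact not_sat_bcd (hmon.2 {R b c d} hsub (Set.singleton_subset_iff.mpr (Or.inr (Or.inl rfl))))
  · rintro ⟨-, x, y, z, u, h1, h2, h3⟩
    simp only [R, Set.mem_insert_iff, Set.mem_singleton_iff, Prod.mk.injEq] at h1 h2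
    rcases h1 with ⟨rfl, rfl, -⟩ | ⟨rfl, rfl, h⟩
    · rcases h2 with ⟨h, -⟩ | ⟨-, -, rfl⟩
      · cases h
      · exact h3 (by simp [D, R])
    · cases h
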